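/- Under the hypotheses above, for any antitone f : D → L and α ∈ L: (α * f)^u = (α * f^u)^u and (f * α)^u = (f^u * α)^u, where operations are applied pointwise and g^u(b) = inf { g(a) ∣ a ≪ b }. -/
import Mathlib


open Classical

variable {D D' L : Type*}

/-- `a` is way below `b`. -/
def WayBelow [Preorder D] (a b : D) : Prop :=
  ∀ S : Set D, S.Nonempty → DirectedOn (· ≤ ·) S → ∀ s : D, IsLUB S s → b ≤ s → ∃ c ∈ S, a ≤ c

/-- Directed-complete poset. -/
def IsDCPO (D : Type*) [Preorder D] : Prop :=
  ∀ S : Set D, S.Nonempty → DirectedOn (· ≤ ·) S → ∃ s : D, IsLUB S s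

/-- A domain: a continuous directed-complete poset. -/
def IsFuzzyDomain (D : Type*) [Preorder D] : Prop :=
  IsDCPO D ∧ ∀ b : D, DirectedOn (· ≤ ·) {a | WayBelow a b} ∧ IsLUB {a | WayBelow a b} b

/-- An `L`-fuzzy monotonic predicate on `D`: an antitone map sending directed
suprema in `D` to infima in `L` (i.e. a Scott-continuous map `D → Lᵒᵖ`). -/
def IsMonPred [Preorder D] [CompleteLattice L] (m : D → L) : Prop :=
  Antitone m ∧ ∀ S : Set D, S.Nonempty → DirectedOn (· ≤ ·) S →
    ∀ s : D, IsLUB S s → m s = ⨅ c ∈ S, m c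

/-- `η d₀` sends `d` to `1` if `d ≤ d₀` and to `0` otherwise. -/
noncomputable def eta [Preorder D] (L : Type*) [CompleteLattice L] (d₀ : D) : D → L :=
  fun d => if d ≤ d₀ then ⊤ else ⊥

/-- `f^u b = ⨅ { f a ∣ a ≪ b }`, the monotonic-predicate hull. -/
noncomputable def uHull [Preorder D] [CompleteLattice L] (f : D → L) : D → L :=
  fun b => ⨅ a ∈ {a | WayBelow a b}, f a

/-- `α ⊙̄ m = (α * m)^u`. -/
noncomputable def smulMP [Preorder D] [CompleteLattice L] (mul : L → L → L)
    (α : L) (m : D → L) : D → L :=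
  uHull (fun d => mul α (m d))

/-- Strongest postcondition transformer:
`sp(φ)(m)(b) = ⨅_{b' ≪ b} ⨆_{a} m a * φ a b'`. -/
noncomputable def sp [Preorder D] [Preorder D'] [CompleteLattice L]
    (mul : L → L → L) (φ : D → D' → L) (m : D → L) : D' → L :=
  fun b => ⨅ b' ∈ {b' | WayBelow b' b}, ⨆ a : D, mul (m a) (φ a b')

/-- Scott continuity of `φ : D → M D'`: `φ` sends a directed supremum in `D`
to the supremum of the image in the poset of monotonic predicates on `D'`. -/
def ScottContTo [Preorder D] [Preorder D'] [CompleteLattice L] (φ : D → D' → L) : Prop :=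
  ∀ S : Set D, S.Nonempty → DirectedOn (· ≤ ·) S → ∀ s : D, IsLUB S s →
    (∀ d ∈ S, φ d ≤ φ s) ∧ ∀ m : D' → L, IsMonPred m → (∀ d ∈ S, φ d ≤ m) → φ s ≤ m


lemma wb_le [Preorder D] {a b : D} (h : WayBelow a b) : a ≤ b := by
  obtain ⟨c, hc, hac⟩ := h {b} ⟨b, rfl⟩
    (fun x hx y hy => ⟨b, rfl, hx.le, hy.le⟩) b isLUB_singleton le_rfl
  exact hac.trans hc.le

lemma wb_mono_left [Preorder D] {a a' b : D} (h : a' ≤ a) (hab : WayBelow a b) :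
    WayBelow a' b := fun S hS hdir s hs hbs => by
  obtain ⟨c, hc, hac⟩ := hab S hS hdir s hs hbs
  exact ⟨c, hc, h.trans hac⟩

lemma wb_mono_right [Preorder D] {a b b' : D} (hab : WayBelow a b) (h : b ≤ b') :
    WayBelow a b' := fun S hS hdir s hs hbs => hab S hS hdir s hs (h.trans hbs)

lemma wb_interp [PartialOrder D] (hD : IsFuzzyDomain D) {a b : D} (h : WayBelow a b) :
    ∃ c, WayBelow a c ∧ WayBelow c b := by
  set S : Set D := {x | ∃ c, WayBelow x c ∧ WayBelow c b} with hSdef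
  have hne : S.Nonempty := by
    have hb := (hD.2 b).2
    -- a ≪ b so the way-below set of b is nonempty
    have hc : WayBelow a b := h
    by_cases hx : ({d | WayBelow d a} : Set D).Nonempty
    · obtain ⟨d, hd⟩ := hx
      exact ⟨d, a, hd, h⟩
    · -- {d ≪ a} is empty, so a is least, hence a ≪ a
      have hlub := (hD.2 a).2
      have hempty : {d | WayBelow d a} = (∅ : Set D) := Set.not_nonempty_iff_eq_empty.mp hx
      have hleast : ∀ x : D, a ≤ x := by
        intro x
        have := hlub.2 (by simp [hempty] : x ∈ upperBounds {d | WayBelow d a})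
        exact this
      have haa : WayBelow a a := by
        intro T hT hdir s hs has
        obtain ⟨t, ht⟩ := hT
        exact ⟨t, ht, hleast t⟩
      exact ⟨a, a, haa, h⟩
  have hdir : DirectedOn (· ≤ ·) S := by
    rintro x₁ ⟨c₁, hx₁, hc₁⟩ x₂ ⟨c₂, hx₂, hc₂⟩
    obtain ⟨c₃, hc₃, h₁₃, h₂₃⟩ := (hD.2 b).1 c₁ hc₁ c₂ hc₂
    have hx₁' : WayBelow x₁ c₃ := wb_mono_right hx₁ h₁₃
    have hx₂' : WayBelow x₂ c₃ := wb_mono_right hx₂ h₂₃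
    obtain ⟨x₃, hx₃, h₁, h₂⟩ := (hD.2 c₃).1 x₁ hx₁' x₂ hx₂'
    exact ⟨x₃, ⟨c₃, hx₃, hc₃⟩, h₁, h₂⟩
  have hlub : IsLUB S b := by
    constructor
    · rintro x ⟨c, hxc, hcb⟩
      exact (wb_le hxc).trans (wb_le hcb)
    · intro u hu
      refine (hD.2 b).2.2 ?_
      intro c hc
      refine (hD.2 c).2.2 ?_
      intro d hd
      exact hu ⟨c, hd, hc⟩
  obtain ⟨x, ⟨c, hxc, hcb⟩, hax⟩ := h S hne hdir b hlub le_rfl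
  exact ⟨c, wb_mono_left hax hxc, hcb⟩

lemma uHull_key [PartialOrder D] [CompleteLattice L] (hD : IsFuzzyDomain D)
    (g : L → L) (hg : Monotone g) (f : D → L) (hf : Antitone f) :
    uHull (fun b => g (f b)) = uHull (fun b => g (uHull f b)) := by
  have hle : ∀ a : D, f a ≤ uHull f a := by
    intro a
    refine le_iInf fun c => le_iInf fun hc => hf (wb_le hc)
  funext b
  simp only [uHull, Set.mem_setOf_eq]
  apply le_antisymm
  · refine le_iInf fun a => le_iInf fun ha => ?_
    refine iInf_le_of_le a (iInf_le_of_le ha (hg ?_))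
    exact le_iInf fun c => le_iInf fun hc => hf (wb_le hc)
  · refine le_iInf fun a => le_iInf fun ha => ?_
    obtain ⟨c, hac, hcb⟩ := wb_interp hD ha
    refine iInf_le_of_le c (iInf_le_of_le hcb (hg ?_))
    exact iInf_le_of_le a (iInf_le_of_le hac le_rfl)

theorem stmt_9 [PartialOrder D] [CompletelyDistribLattice L]
    (hD : IsFuzzyDomain D) (mul : L → L → L)
    (hassoc : ∀ a b c : L, mul (mul a b) c = mul a (mul b c))
    (hone : ∀ a : L, mul ⊤ a = a ∧ mul a ⊤ = a)
    (hsup₁ : ∀ (a : L) (S : Set L), mul a (sSup S) = ⨆ b ∈ S, mul a b)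
    (hsup₂ : ∀ (a : L) (S : Set L), mul (sSup S) a = ⨆ b ∈ S, mul b a)
    (α : L) (f : D → L) (hf : Antitone f) :
    uHull (fun b => mul α (f b)) = uHull (fun b => mul α (uHull f b)) ∧
    uHull (fun b => mul (f b) α) = uHull (fun b => mul (uHull f b) α) := by
  have hmono₁ : Monotone (mul α) := by
    intro x y hxy
    have h := hsup₁ α {x, y}
    rw [sSup_pair, sup_eq_right.mpr hxy, iSup_pair] at h
    rw [h]; exact le_sup_left
  have hmono₂ : Monotone (fun x => mul x α) := by
    intro x y hxy
    have h := hsup₂ α {x, y}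
    rw [sSup_pair, sup_eq_right.mpr hxy, iSup_pair] at h
    simp only []
    rw [h]; exact le_sup_left
  exact ⟨uHull_key hD (mul α) hmono₁ f hf, uHull_key hD (fun x => mul x α) hmono₂ f hf⟩
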